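/- Let λ : U_ζ → ℂ be any ℂ-linear map satisfying λ(F^i K^j E^m) = δ_{i,ℓ−1}·δ_{j,2(ℓ−1)}·δ_{m,ℓ−1} for all integers 0 ≤ i, m ≤ ℓ−1 and 0 ≤ j ≤ 4ℓ−1. Then λ is a left integral on U_ζ: for every ℂ-linear map g : U_ζ → ℂ, the convolution product g·λ, defined by (g·λ)(x) = Σ g(x′)·λ(x″) where Δ(x) = Σ x′ ⊗ x″, equals g(1)·λ as a linear functional on U_ζ. -/
import Mathlib


open scoped TensorProduct

noncomputable section
namespace RestrictedQsl2

inductive Gen : Type | E | F | K | Kinv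

abbrev FA : Type := FreeAlgebra ℂ Gen

/-- `t = exp(πi/ℓ)`. -/
def tval (ℓ : ℕ) : ℂ := Complex.exp (Real.pi * Complex.I / ℓ)

/-- `s = exp(πi/(2ℓ))`, so `s² = t`. -/
def sval (ℓ : ℕ) : ℂ := Complex.exp (Real.pi * Complex.I / (2 * ℓ))

/-- Defining relations of the restricted quantum group `U_ζ(sl₂)`. -/
inductive Rel (ℓ : ℕ) : FA → FA → Prop
  | KKinv : Rel ℓ (FreeAlgebra.ι ℂ Gen.K * FreeAlgebra.ι ℂ Gen.Kinv) 1
  | KinvK : Rel ℓ (FreeAlgebra.ι ℂ Gen.Kinv * FreeAlgebra.ι ℂ Gen.K) 1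
  | KE : Rel ℓ (FreeAlgebra.ι ℂ Gen.K * FreeAlgebra.ι ℂ Gen.E)
      (tval ℓ • (FreeAlgebra.ι ℂ Gen.E * FreeAlgebra.ι ℂ Gen.K))
  | KF : Rel ℓ (FreeAlgebra.ι ℂ Gen.K * FreeAlgebra.ι ℂ Gen.F)
      ((tval ℓ)⁻¹ • (FreeAlgebra.ι ℂ Gen.F * FreeAlgebra.ι ℂ Gen.K))
  | EF : Rel ℓ
      (FreeAlgebra.ι ℂ Gen.E * FreeAlgebra.ι ℂ Gen.F -
        FreeAlgebra.ι ℂ Gen.F * FreeAlgebra.ι ℂ Gen.E)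
      ((tval ℓ - (tval ℓ)⁻¹)⁻¹ • (FreeAlgebra.ι ℂ Gen.K ^ 2 - FreeAlgebra.ι ℂ Gen.Kinv ^ 2))
  | Epow : Rel ℓ (FreeAlgebra.ι ℂ Gen.E ^ ℓ) 0
  | Fpow : Rel ℓ (FreeAlgebra.ι ℂ Gen.F ^ ℓ) 0
  | Kpow : Rel ℓ (FreeAlgebra.ι ℂ Gen.K ^ (4 * ℓ)) 1

/-- The restricted quantum group `U_ζ(sl₂)`. -/
abbrev Uq (ℓ : ℕ) : Type := RingQuot (Rel ℓ)

def gE (ℓ : ℕ) : Uq ℓ := RingQuot.mkAlgHom ℂ (Rel ℓ) (FreeAlgebra.ι ℂ Gen.E)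
def gF (ℓ : ℕ) : Uq ℓ := RingQuot.mkAlgHom ℂ (Rel ℓ) (FreeAlgebra.ι ℂ Gen.F)
def gK (ℓ : ℕ) : Uq ℓ := RingQuot.mkAlgHom ℂ (Rel ℓ) (FreeAlgebra.ι ℂ Gen.K)
def gKinv (ℓ : ℕ) : Uq ℓ := RingQuot.mkAlgHom ℂ (Rel ℓ) (FreeAlgebra.ι ℂ Gen.Kinv)

/-- The Casimir element `C = FE + (K²t + K⁻²t⁻¹)/(t-t⁻¹)²`. -/
def Cas (ℓ : ℕ) : Uq ℓ :=
  gF ℓ * gE ℓ +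
    ((tval ℓ - (tval ℓ)⁻¹) ^ 2)⁻¹ • (tval ℓ • gK ℓ ^ 2 + (tval ℓ)⁻¹ • gKinv ℓ ^ 2)

/-- Quantum integer `[n]`. -/
def qint (ℓ n : ℕ) : ℂ := (tval ℓ ^ n - (tval ℓ)⁻¹ ^ n) / (tval ℓ - (tval ℓ)⁻¹)

/-- Quantum factorial `[n]!`. -/
def qfact (ℓ n : ℕ) : ℂ := ∏ k ∈ Finset.range n, qint ℓ (k + 1)

/-- The diagonal part `D` of the universal `R`-matrix. -/
def Dmat (ℓ : ℕ) : Uq ℓ ⊗[ℂ] Uq ℓ :=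
  ((4 * ℓ : ℂ))⁻¹ • ∑ m ∈ Finset.range (4 * ℓ), ∑ n ∈ Finset.range (4 * ℓ),
    (sval ℓ ^ (-(m * n : ℤ))) • ((gK ℓ ^ m) ⊗ₜ[ℂ] (gK ℓ ^ n))

/-- The universal `R`-matrix. -/
def Rmat (ℓ : ℕ) : Uq ℓ ⊗[ℂ] Uq ℓ :=
  Dmat ℓ * ∑ n ∈ Finset.range ℓ,
    (((tval ℓ - (tval ℓ)⁻¹) ^ n / qfact ℓ n) * tval ℓ ^ (n * (n - 1) / 2)) •
      ((gE ℓ ^ n) ⊗ₜ[ℂ] (gF ℓ ^ n))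

/-- The even subalgebra `U^ev`, generated by `E`, `F`, `K²`, `K⁻²`. -/
def Uev (ℓ : ℕ) : Subalgebra ℂ (Uq ℓ) :=
  Algebra.adjoin ℂ {gE ℓ, gF ℓ, gK ℓ ^ 2, gKinv ℓ ^ 2}

/-- The image of `U^ev ⊗ U^ev` in `U_ζ ⊗ U_ζ`. -/
def UevT (ℓ : ℕ) : Submodule ℂ (Uq ℓ ⊗[ℂ] Uq ℓ) :=
  LinearMap.range
    (TensorProduct.map (Subalgebra.toSubmodule (Uev ℓ)).subtype
      (Subalgebra.toSubmodule (Uev ℓ)).subtype)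

/-- The adjoint action, as a linear map `x ⊗ r ↦ ad_r(x) = Σ r′ x S(r″)`. -/
def adMap (ℓ : ℕ) (Δ : Uq ℓ →ₐ[ℂ] Uq ℓ ⊗[ℂ] Uq ℓ) (S : Uq ℓ →ₗ[ℂ] Uq ℓ) :
    Uq ℓ ⊗[ℂ] Uq ℓ →ₗ[ℂ] Uq ℓ :=
  LinearMap.mul' ℂ (Uq ℓ) ∘ₗ
    TensorProduct.map LinearMap.id (LinearMap.mul' ℂ (Uq ℓ)) ∘ₗ
    (TensorProduct.leftComm ℂ (Uq ℓ) (Uq ℓ) (Uq ℓ)).toLinearMap ∘ₗ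
    TensorProduct.map LinearMap.id (TensorProduct.map LinearMap.id S) ∘ₗ
    TensorProduct.map LinearMap.id Δ.toLinearMap

/-- `adL y : a ↦ ad_a(y)`, linear in `a`. -/
def adL (ℓ : ℕ) (Δ : Uq ℓ →ₐ[ℂ] Uq ℓ ⊗[ℂ] Uq ℓ) (S : Uq ℓ →ₗ[ℂ] Uq ℓ) (y : Uq ℓ) :
    Uq ℓ →ₗ[ℂ] Uq ℓ :=
  adMap ℓ Δ S ∘ₗ TensorProduct.mk ℂ (Uq ℓ) (Uq ℓ) y

/-! ### Auxiliary development for the left-integral theorem -/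

/-- q-binomial coefficients via recursion. -/
def cq (q : ℂ) : ℕ → ℕ → ℂ
  | 0, 0 => 1
  | 0, _+1 => 0
  | _+1, 0 => 1
  | n+1, a+1 => q ^ (a+1) * cq q n (a+1) + cq q n a

theorem cq_of_gt (q : ℂ) : ∀ {n a : ℕ}, n < a → cq q n a = 0
  | 0, _+1, _ => rfl
  | n+1, a+1, h => by
      rw [cq, cq_of_gt q (by omega), cq_of_gt q (by omega), mul_zero, add_zero]

theorem cq_diag (q : ℂ) : ∀ n, cq q n n = 1
  | 0 => rfl
  | n+1 => by rw [cq, cq_of_gt q (by omega), mul_zero, zero_add, cq_diag q n]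

theorem cq_zero (q : ℂ) : ∀ n, cq q n 0 = 1
  | 0 => rfl
  | _+1 => rfl

section QComm
variable {A : Type*} [Ring A] [Algebra ℂ A]

theorem qswap {a b : A} {c : ℂ} (hc : c ≠ 0) (h : a * b = c • (b * a)) :
    b * a = c⁻¹ • (a * b) := by
  rw [h, smul_smul, inv_mul_cancel₀ hc, one_smul]

theorem qpow_left {a b : A} {c : ℂ} (h : a * b = c • (b * a)) :
    ∀ n : ℕ, a ^ n * b = c ^ n • (b * a ^ n)
  | 0 => by simp
  | n+1 => by
      rw [pow_succ, mul_assoc, h, mul_smul_comm, ← mul_assoc, qpow_left h n,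
        smul_mul_assoc, smul_smul, ← pow_succ', mul_assoc]

theorem qpow_right {a b : A} {c : ℂ} (h : a * b = c • (b * a)) :
    ∀ n : ℕ, a * b ^ n = c ^ n • (b ^ n * a)
  | 0 => by simp
  | n+1 => by
      rw [pow_succ', ← mul_assoc, h, smul_mul_assoc, mul_assoc, qpow_right h n,
        mul_smul_comm, smul_smul, ← mul_assoc, ← pow_succ']

/-- q-binomial theorem for `q`-commuting elements. -/
theorem q_add_pow (q : ℂ) (X Y : A) (h : Y * X = q • (X * Y)) (n : ℕ) :
    (X + Y) ^ n = ∑ a ∈ Finset.range (n+1), cq q n a • (X ^ (n - a) * Y ^ a) := by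
  induction n with
  | zero => simp [cq]
  | succ n ih =>
    have hYaX : ∀ a : ℕ, Y ^ a * X = q ^ a • (X * Y ^ a) := fun a => qpow_left h a
    have key : ∀ a ∈ Finset.range (n+1),
        cq q n a • (X ^ (n - a) * Y ^ a) * (X + Y)
          = (q ^ a * cq q n a) • (X ^ (n + 1 - a) * Y ^ a)
            + cq q n a • (X ^ (n + 1 - (a+1)) * Y ^ (a+1)) := by
      intro a ha
      rw [Finset.mem_range] at ha
      have h1 : X ^ (n - a) * Y ^ a * X = q ^ a • (X ^ (n + 1 - a) * Y ^ a) := by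
        rw [mul_assoc, hYaX, mul_smul_comm, ← mul_assoc, ← pow_succ]
        congr 3
        omega
      have h2 : X ^ (n - a) * Y ^ a * Y = X ^ (n + 1 - (a+1)) * Y ^ (a+1) := by
        rw [mul_assoc, ← pow_succ, Nat.succ_sub_succ]
      rw [mul_add, smul_mul_assoc, smul_mul_assoc, h1, h2, smul_smul, mul_comm (cq q n a)]
    rw [pow_succ, ih, Finset.sum_mul, Finset.sum_congr rfl key, Finset.sum_add_distrib]
    have e1 : ∑ a ∈ Finset.range (n+1), (q ^ a * cq q n a) • (X ^ (n+1-a) * Y ^ a)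
        = ∑ a ∈ Finset.range (n+2), (q ^ a * cq q n a) • (X ^ (n+1-a) * Y ^ a) := by
      rw [Finset.sum_range_succ (fun a => (q ^ a * cq q n a) • (X ^ (n+1-a) * Y ^ a)) (n+1),
        cq_of_gt q (Nat.lt_succ_self n), mul_zero, zero_smul, add_zero]
    rw [e1, Finset.sum_range_succ' (fun a => (q ^ a * cq q n a) • (X ^ (n+1-a) * Y ^ a)) (n+1),
      Finset.sum_range_succ' (fun a => cq q (n+1) a • (X ^ (n+1-a) * Y ^ a)) (n+1)]
    simp only [cq, cq_zero, pow_zero, one_mul, one_smul, add_smul, Finset.sum_add_distrib]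
    abel

end QComm

section UqLemmas
variable (ℓ : ℕ)

theorem ht0 : tval ℓ ≠ 0 := Complex.exp_ne_zero _

theorem rKKinv : gK ℓ * gKinv ℓ = 1 := by
  simpa only [map_mul, map_one, gK, gKinv] using
    RingQuot.mkAlgHom_rel ℂ (Rel.KKinv (ℓ := ℓ))

theorem rKE : gK ℓ * gE ℓ = tval ℓ • (gE ℓ * gK ℓ) := by
  simpa only [map_mul, map_smul, gK, gE] using
    RingQuot.mkAlgHom_rel ℂ (Rel.KE (ℓ := ℓ))

theorem rKF : gK ℓ * gF ℓ = (tval ℓ)⁻¹ • (gF ℓ * gK ℓ) := by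
  simpa only [map_mul, map_smul, gK, gF] using
    RingQuot.mkAlgHom_rel ℂ (Rel.KF (ℓ := ℓ))

theorem rEF : gE ℓ * gF ℓ - gF ℓ * gE ℓ
    = (tval ℓ - (tval ℓ)⁻¹)⁻¹ • (gK ℓ ^ 2 - gKinv ℓ ^ 2) := by
  simpa only [map_mul, map_smul, map_sub, map_pow, gK, gE, gF, gKinv] using
    RingQuot.mkAlgHom_rel ℂ (Rel.EF (ℓ := ℓ))

theorem rEpow : gE ℓ ^ ℓ = 0 := by
  simpa only [map_pow, map_zero, gE] using
    RingQuot.mkAlgHom_rel ℂ (Rel.Epow (ℓ := ℓ))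

theorem rFpow : gF ℓ ^ ℓ = 0 := by
  simpa only [map_pow, map_zero, gF] using
    RingQuot.mkAlgHom_rel ℂ (Rel.Fpow (ℓ := ℓ))

theorem rKpow : gK ℓ ^ (4 * ℓ) = 1 := by
  simpa only [map_pow, map_one, gK] using
    RingQuot.mkAlgHom_rel ℂ (Rel.Kpow (ℓ := ℓ))

theorem hKinv (hℓ : 1 < ℓ) : gKinv ℓ = gK ℓ ^ (4*ℓ - 1) := by
  have h4 : 4*ℓ - 1 + 1 = 4*ℓ := by omega
  calc gKinv ℓ = 1 * gKinv ℓ := (one_mul _).symm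
  _ = gK ℓ ^ (4*ℓ) * gKinv ℓ := by rw [rKpow]
  _ = gK ℓ ^ (4*ℓ-1) * (gK ℓ * gKinv ℓ) := by rw [← mul_assoc, ← pow_succ, h4]
  _ = gK ℓ ^ (4*ℓ-1) := by rw [rKKinv, mul_one]

theorem gK_pow_mod (n : ℕ) : gK ℓ ^ n = gK ℓ ^ (n % (4*ℓ)) := by
  conv_lhs => rw [← Nat.div_add_mod n (4*ℓ)]
  rw [pow_add, pow_mul, rKpow, one_pow, one_mul]

theorem hEK1 : gE ℓ * gK ℓ = (tval ℓ)⁻¹ • (gK ℓ * gE ℓ) := qswap (ht0 ℓ) (rKE ℓ)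

theorem hEnKj (n j : ℕ) :
    gE ℓ ^ n * gK ℓ ^ j = (tval ℓ)⁻¹ ^ (n*j) • (gK ℓ ^ j * gE ℓ ^ n) := by
  have h1 := qpow_left (hEK1 ℓ) n
  simpa only [← pow_mul] using qpow_right h1 j

theorem hKjEn (j n : ℕ) :
    gK ℓ ^ j * gE ℓ ^ n = tval ℓ ^ (j*n) • (gE ℓ ^ n * gK ℓ ^ j) := by
  have h1 := qpow_left (rKE ℓ) j
  simpa only [← pow_mul] using qpow_right h1 n

theorem hKjF (j : ℕ) : gK ℓ ^ j * gF ℓ = (tval ℓ)⁻¹ ^ j • (gF ℓ * gK ℓ ^ j) :=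
  qpow_left (rKF ℓ) j

/-- Commutator formula `E^(m+1) F = F E^(m+1) + (Σ stuff) E^m`. -/
theorem E_pow_F (hℓ : 1 < ℓ) (m : ℕ) :
    gE ℓ ^ (m+1) * gF ℓ = gF ℓ * gE ℓ ^ (m+1) +
      (∑ k ∈ Finset.range (m+1),
        (tval ℓ - (tval ℓ)⁻¹)⁻¹ •
          ((tval ℓ)⁻¹ ^ (k*2) • gK ℓ ^ 2 - (tval ℓ)⁻¹ ^ (k*((4*ℓ-1)*2)) • gKinv ℓ ^ 2))
        * gE ℓ ^ m := by
  have hEF : gE ℓ * gF ℓ = gF ℓ * gE ℓ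
      + (tval ℓ - (tval ℓ)⁻¹)⁻¹ • (gK ℓ ^ 2 - gKinv ℓ ^ 2) := by
    rw [← rEF]; abel
  have hKinv2 : gKinv ℓ ^ 2 = gK ℓ ^ ((4*ℓ-1)*2) := by
    rw [hKinv ℓ hℓ, ← pow_mul]
  induction m with
  | zero =>
    simp only [zero_add, pow_one, Finset.range_one, Finset.sum_singleton, Nat.zero_mul,
      pow_zero, one_smul, mul_one]
    exact hEF
  | succ m ih =>
    have hK2 : gE ℓ ^ (m+1) * gK ℓ ^ 2
        = (tval ℓ)⁻¹ ^ ((m+1)*2) • (gK ℓ ^ 2 * gE ℓ ^ (m+1)) := hEnKj ℓ (m+1) 2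
    have hKi2 : gE ℓ ^ (m+1) * gKinv ℓ ^ 2
        = (tval ℓ)⁻¹ ^ ((m+1)*((4*ℓ-1)*2)) • (gKinv ℓ ^ 2 * gE ℓ ^ (m+1)) := by
      rw [hKinv2, hEnKj ℓ (m+1) ((4*ℓ-1)*2), ← hKinv2]
    calc gE ℓ ^ (m+1+1) * gF ℓ
        = gE ℓ ^ (m+1) * (gE ℓ * gF ℓ) := by rw [← mul_assoc, ← pow_succ]
      _ = gE ℓ ^ (m+1) * (gF ℓ * gE ℓ)
          + (tval ℓ - (tval ℓ)⁻¹)⁻¹ • (gE ℓ ^ (m+1) * gK ℓ ^ 2 - gE ℓ ^ (m+1) * gKinv ℓ ^ 2) := by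
          rw [hEF, mul_add, mul_smul_comm, mul_sub]
      _ = (gE ℓ ^ (m+1) * gF ℓ) * gE ℓ
          + ((tval ℓ - (tval ℓ)⁻¹)⁻¹ • ((tval ℓ)⁻¹ ^ ((m+1)*2) • gK ℓ ^ 2
              - (tval ℓ)⁻¹ ^ ((m+1)*((4*ℓ-1)*2)) • gKinv ℓ ^ 2)) * gE ℓ ^ (m+1) := by
          rw [hK2, hKi2, ← mul_assoc]
          simp only [smul_mul_assoc, sub_mul, smul_sub]
      _ = (gF ℓ * gE ℓ ^ (m+1) + (∑ k ∈ Finset.range (m+1),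
              (tval ℓ - (tval ℓ)⁻¹)⁻¹ • ((tval ℓ)⁻¹ ^ (k*2) • gK ℓ ^ 2
                - (tval ℓ)⁻¹ ^ (k*((4*ℓ-1)*2)) • gKinv ℓ ^ 2)) * gE ℓ ^ m) * gE ℓ
          + ((tval ℓ - (tval ℓ)⁻¹)⁻¹ • ((tval ℓ)⁻¹ ^ ((m+1)*2) • gK ℓ ^ 2
              - (tval ℓ)⁻¹ ^ ((m+1)*((4*ℓ-1)*2)) • gKinv ℓ ^ 2)) * gE ℓ ^ (m+1) := by
          rw [ih]
      _ = gF ℓ * gE ℓ ^ (m+1+1) + (∑ k ∈ Finset.range (m+1+1),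
              (tval ℓ - (tval ℓ)⁻¹)⁻¹ • ((tval ℓ)⁻¹ ^ (k*2) • gK ℓ ^ 2
                - (tval ℓ)⁻¹ ^ (k*((4*ℓ-1)*2)) • gKinv ℓ ^ 2)) * gE ℓ ^ (m+1) := by
          rw [add_mul, mul_assoc, ← pow_succ, mul_assoc, ← pow_succ,
            Finset.sum_range_succ (fun k => (tval ℓ - (tval ℓ)⁻¹)⁻¹ •
              ((tval ℓ)⁻¹ ^ (k*2) • gK ℓ ^ 2
                - (tval ℓ)⁻¹ ^ (k*((4*ℓ-1)*2)) • gKinv ℓ ^ 2)) (m+1),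
            add_mul (∑ k ∈ Finset.range (m+1), (tval ℓ - (tval ℓ)⁻¹)⁻¹ •
              ((tval ℓ)⁻¹ ^ (k*2) • gK ℓ ^ 2
                - (tval ℓ)⁻¹ ^ (k*((4*ℓ-1)*2)) • gKinv ℓ ^ 2)) _ (gE ℓ ^ (m+1)),
            add_assoc]

end UqLemmas

section Span
variable (ℓ : ℕ)

/-- PBW monomials. -/
def Mon : Set (Uq ℓ) :=
  {x | ∃ i j m : ℕ, i ≤ ℓ-1 ∧ j ≤ 4*ℓ-1 ∧ m ≤ ℓ-1 ∧ x = gF ℓ ^ i * gK ℓ ^ j * gE ℓ ^ m}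

/-- Span of PBW monomials. -/
def SM : Submodule ℂ (Uq ℓ) := Submodule.span ℂ (Mon ℓ)

theorem mem_SM_all (hℓ : 1 < ℓ) (i j m : ℕ) :
    gF ℓ ^ i * gK ℓ ^ j * gE ℓ ^ m ∈ SM ℓ := by
  rcases le_or_gt i (ℓ-1) with hi | hi
  · rcases le_or_gt m (ℓ-1) with hm | hm
    · refine Submodule.subset_span ⟨i, j % (4*ℓ), m, hi, ?_, hm, ?_⟩
      · have : j % (4*ℓ) < 4*ℓ := Nat.mod_lt _ (by omega)
        omega
      · rw [← gK_pow_mod]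
    · have hz : gE ℓ ^ m = 0 := by
        have h : m = ℓ + (m - ℓ) := by omega
        rw [h, pow_add, rEpow, zero_mul]
      rw [hz, mul_zero]; exact zero_mem _
  · have hz : gF ℓ ^ i = 0 := by
      have h : i = ℓ + (i - ℓ) := by omega
      rw [h, pow_add, rFpow, zero_mul]
    rw [hz, zero_mul, zero_mul]; exact zero_mem _

theorem mon_mul_E (hℓ : 1 < ℓ) (i j m : ℕ) :
    gF ℓ ^ i * gK ℓ ^ j * gE ℓ ^ m * gE ℓ ∈ SM ℓ := by
  rw [mul_assoc, ← pow_succ]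
  exact mem_SM_all ℓ hℓ i j (m+1)

theorem mon_mul_Kpow (hℓ : 1 < ℓ) (i j m p : ℕ) :
    gF ℓ ^ i * gK ℓ ^ j * gE ℓ ^ m * gK ℓ ^ p ∈ SM ℓ := by
  rw [mul_assoc, hEnKj ℓ m p, mul_smul_comm, ← mul_assoc, mul_assoc (gF ℓ ^ i), ← pow_add]
  exact Submodule.smul_mem _ _ (mem_SM_all ℓ hℓ i (j+p) m)

theorem mon_mul_F (hℓ : 1 < ℓ) (i j m : ℕ) :
    gF ℓ ^ i * gK ℓ ^ j * gE ℓ ^ m * gF ℓ ∈ SM ℓ := by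
  have base : ∀ i' j' : ℕ, gF ℓ ^ i' * gK ℓ ^ j' * gF ℓ ∈ SM ℓ := by
    intro i' j'
    rw [mul_assoc, hKjF ℓ j', mul_smul_comm, ← mul_assoc, ← pow_succ]
    refine Submodule.smul_mem _ _ ?_
    have := mem_SM_all ℓ hℓ (i'+1) j' 0
    simpa using this
  cases m with
  | zero =>
    simpa using base i j
  | succ m =>
    rw [mul_assoc, E_pow_F ℓ hℓ m, mul_add]
    refine add_mem ?_ ?_
    · rw [← mul_assoc, mul_assoc (gF ℓ ^ i) (gK ℓ ^ j) (gF ℓ), hKjF ℓ j, mul_smul_comm,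
        smul_mul_assoc, ← mul_assoc, ← pow_succ]
      refine Submodule.smul_mem _ _ ?_
      rw [mul_assoc, ← mul_assoc]
      exact mem_SM_all ℓ hℓ (i+1) j (m+1)
    · rw [← mul_assoc, Finset.mul_sum, Finset.sum_mul]
      refine Submodule.sum_mem _ fun k _ => ?_
      rw [mul_smul_comm, smul_mul_assoc]
      refine Submodule.smul_mem _ _ ?_
      rw [mul_sub, sub_mul]
      refine sub_mem ?_ ?_
      · rw [mul_smul_comm, smul_mul_assoc]
        refine Submodule.smul_mem _ _ ?_
        rw [mul_assoc (gF ℓ ^ i), ← pow_add]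
        exact mem_SM_all ℓ hℓ i (j+2) m
      · rw [mul_smul_comm, smul_mul_assoc]
        refine Submodule.smul_mem _ _ ?_
        rw [hKinv ℓ hℓ, ← pow_mul, mul_assoc (gF ℓ ^ i), ← pow_add]
        exact mem_SM_all ℓ hℓ i (j+(4*ℓ-1)*2) m

theorem SM_mul_E (hℓ : 1 < ℓ) : ∀ s ∈ SM ℓ, s * gE ℓ ∈ SM ℓ := by
  intro s hs
  induction hs using Submodule.span_induction with
  | mem x hx => obtain ⟨i, j, m, _, _, _, rfl⟩ := hx; exact mon_mul_E ℓ hℓ i j m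
  | zero => rw [zero_mul]; exact zero_mem _
  | add y z _ _ hy hz => rw [add_mul]; exact add_mem hy hz
  | smul c y _ hy => rw [smul_mul_assoc]; exact Submodule.smul_mem _ _ hy

theorem SM_mul_F (hℓ : 1 < ℓ) : ∀ s ∈ SM ℓ, s * gF ℓ ∈ SM ℓ := by
  intro s hs
  induction hs using Submodule.span_induction with
  | mem x hx => obtain ⟨i, j, m, _, _, _, rfl⟩ := hx; exact mon_mul_F ℓ hℓ i j m
  | zero => rw [zero_mul]; exact zero_mem _
  | add y z _ _ hy hz => rw [add_mul]; exact add_mem hy hz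
  | smul c y _ hy => rw [smul_mul_assoc]; exact Submodule.smul_mem _ _ hy

theorem SM_mul_K (hℓ : 1 < ℓ) : ∀ s ∈ SM ℓ, s * gK ℓ ∈ SM ℓ := by
  intro s hs
  induction hs using Submodule.span_induction with
  | mem x hx =>
    obtain ⟨i, j, m, _, _, _, rfl⟩ := hx
    have := mon_mul_Kpow ℓ hℓ i j m 1
    simpa using this
  | zero => rw [zero_mul]; exact zero_mem _
  | add y z _ _ hy hz => rw [add_mul]; exact add_mem hy hz
  | smul c y _ hy => rw [smul_mul_assoc]; exact Submodule.smul_mem _ _ hy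

theorem SM_mul_Kinv (hℓ : 1 < ℓ) : ∀ s ∈ SM ℓ, s * gKinv ℓ ∈ SM ℓ := by
  intro s hs
  induction hs using Submodule.span_induction with
  | mem x hx =>
    obtain ⟨i, j, m, _, _, _, rfl⟩ := hx
    rw [hKinv ℓ hℓ]
    exact mon_mul_Kpow ℓ hℓ i j m (4*ℓ-1)
  | zero => rw [zero_mul]; exact zero_mem _
  | add y z _ _ hy hz => rw [add_mul]; exact add_mem hy hz
  | smul c y _ hy => rw [smul_mul_assoc]; exact Submodule.smul_mem _ _ hy

theorem SM_top (hℓ : 1 < ℓ) : ∀ x : Uq ℓ, x ∈ SM ℓ := by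
  have h1 : (1 : Uq ℓ) ∈ SM ℓ := by
    have := mem_SM_all ℓ hℓ 0 0 0
    simpa using this
  have main : ∀ w : FA, ∀ s ∈ SM ℓ, s * RingQuot.mkAlgHom ℂ (Rel ℓ) w ∈ SM ℓ := by
    intro w
    induction w using FreeAlgebra.induction with
    | grade0 r =>
      intro s hs
      rw [AlgHom.commutes, Algebra.algebraMap_eq_smul_one, mul_smul_comm, mul_one]
      exact Submodule.smul_mem _ _ hs
    | grade1 x =>
      intro s hs
      cases x with
      | E => exact SM_mul_E ℓ hℓ s hs
      | F => exact SM_mul_F ℓ hℓ s hs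
      | K => exact SM_mul_K ℓ hℓ s hs
      | Kinv => exact SM_mul_Kinv ℓ hℓ s hs
    | mul a b ha hb =>
      intro s hs
      rw [map_mul, ← mul_assoc]
      exact hb _ (ha _ hs)
    | add a b ha hb =>
      intro s hs
      rw [map_add, mul_add]
      exact add_mem (ha s hs) (hb s hs)
  intro x
  obtain ⟨w, rfl⟩ := RingQuot.mkAlgHom_surjective ℂ (Rel ℓ) x
  have := main w 1 h1
  simpa using this

end Span

section Coproduct
variable (ℓ : ℕ)

theorem Delta_F_pow (hℓ : 1 < ℓ) (Δ : Uq ℓ →ₐ[ℂ] Uq ℓ ⊗[ℂ] Uq ℓ)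
    (hΔF : Δ (gF ℓ) = gF ℓ ⊗ₜ[ℂ] 1 + (gKinv ℓ ^ 2) ⊗ₜ[ℂ] gF ℓ) (i : ℕ) :
    Δ (gF ℓ) ^ i = ∑ a ∈ Finset.range (i+1), cq ((tval ℓ)⁻¹ ^ ((4*ℓ-1)*2)) i a •
      ((gF ℓ ^ (i-a) * gK ℓ ^ ((4*ℓ-1)*2*a)) ⊗ₜ[ℂ] (gF ℓ ^ a)) := by
  have hX : Δ (gF ℓ) = gF ℓ ⊗ₜ[ℂ] (1 : Uq ℓ) + (gK ℓ ^ ((4*ℓ-1)*2)) ⊗ₜ[ℂ] gF ℓ := by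
    rw [hΔF, hKinv ℓ hℓ, ← pow_mul]
  have hcomm : (gK ℓ ^ ((4*ℓ-1)*2)) ⊗ₜ[ℂ] gF ℓ * (gF ℓ ⊗ₜ[ℂ] (1 : Uq ℓ))
      = ((tval ℓ)⁻¹ ^ ((4*ℓ-1)*2)) •
        ((gF ℓ ⊗ₜ[ℂ] (1 : Uq ℓ)) * ((gK ℓ ^ ((4*ℓ-1)*2)) ⊗ₜ[ℂ] gF ℓ)) := by
    rw [Algebra.TensorProduct.tmul_mul_tmul, Algebra.TensorProduct.tmul_mul_tmul,
      hKjF ℓ ((4*ℓ-1)*2), mul_one, one_mul, TensorProduct.smul_tmul']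
  rw [hX, q_add_pow (A := Uq ℓ ⊗[ℂ] Uq ℓ) _ _ _ hcomm i]
  refine Finset.sum_congr rfl fun a ha => ?_
  congr 1
  rw [Algebra.TensorProduct.tmul_pow, Algebra.TensorProduct.tmul_pow,
    Algebra.TensorProduct.tmul_mul_tmul, one_pow, one_mul, ← pow_mul]
  try rfl

theorem Delta_E_pow (Δ : Uq ℓ →ₐ[ℂ] Uq ℓ ⊗[ℂ] Uq ℓ)
    (hΔE : Δ (gE ℓ) = 1 ⊗ₜ[ℂ] gE ℓ + gE ℓ ⊗ₜ[ℂ] (gK ℓ ^ 2)) (m : ℕ) :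
    Δ (gE ℓ) ^ m = ∑ b ∈ Finset.range (m+1), cq (tval ℓ ^ 2) m b •
      ((gE ℓ ^ b) ⊗ₜ[ℂ] (gE ℓ ^ (m-b) * gK ℓ ^ (2*b))) := by
  have hKE2 : gK ℓ ^ 2 * gE ℓ = tval ℓ ^ 2 • (gE ℓ * gK ℓ ^ 2) := by
    have h := hKjEn ℓ 2 1
    rw [pow_one, show (2*1 : ℕ) = 2 from rfl] at h
    exact h
  have hcomm : (gE ℓ ⊗ₜ[ℂ] (gK ℓ ^ 2)) * ((1 : Uq ℓ) ⊗ₜ[ℂ] gE ℓ)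
      = tval ℓ ^ 2 • (((1 : Uq ℓ) ⊗ₜ[ℂ] gE ℓ) * (gE ℓ ⊗ₜ[ℂ] (gK ℓ ^ 2))) := by
    rw [Algebra.TensorProduct.tmul_mul_tmul, Algebra.TensorProduct.tmul_mul_tmul,
      hKE2, mul_one, one_mul, TensorProduct.tmul_smul]
  rw [hΔE, q_add_pow (A := Uq ℓ ⊗[ℂ] Uq ℓ) _ _ _ hcomm m]
  refine Finset.sum_congr rfl fun b hb => ?_
  congr 1
  rw [Algebra.TensorProduct.tmul_pow, Algebra.TensorProduct.tmul_pow,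
    Algebra.TensorProduct.tmul_mul_tmul, one_pow, one_mul, ← pow_mul]
  try rfl

theorem lam_second (hℓ : 1 < ℓ) (lam : Uq ℓ →ₗ[ℂ] ℂ)
    (hlam : ∀ i j m : ℕ, i ≤ ℓ - 1 → j ≤ 4 * ℓ - 1 → m ≤ ℓ - 1 →
      lam (gF ℓ ^ i * gK ℓ ^ j * gE ℓ ^ m) =
        (if i = ℓ - 1 then 1 else 0) * (if j = 2 * (ℓ - 1) then 1 else 0) *
          (if m = ℓ - 1 then 1 else 0))
    (a c b j : ℕ) (ha : a ≤ ℓ-1) (hc : c ≤ ℓ-1) (hj : j ≤ 4*ℓ-1) :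
    lam (gF ℓ ^ a * gK ℓ ^ j * (gE ℓ ^ c * gK ℓ ^ (2*b))) =
      (tval ℓ)⁻¹ ^ (c*(2*b)) *
        ((if a = ℓ-1 then 1 else 0) * (if (j+2*b) % (4*ℓ) = 2*(ℓ-1) then 1 else 0) *
          (if c = ℓ-1 then 1 else 0)) := by
  have hjb : (j+2*b) % (4*ℓ) ≤ 4*ℓ-1 := by
    have : (j+2*b) % (4*ℓ) < 4*ℓ := Nat.mod_lt _ (by omega)
    omega
  rw [hEnKj ℓ c (2*b), mul_smul_comm, map_smul, smul_eq_mul]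
  congr 1
  have h2 : gF ℓ ^ a * gK ℓ ^ j * (gK ℓ ^ (2*b) * gE ℓ ^ c)
      = gF ℓ ^ a * gK ℓ ^ ((j+2*b) % (4*ℓ)) * gE ℓ ^ c := by
    rw [← mul_assoc, mul_assoc (gF ℓ ^ a), ← pow_add, gK_pow_mod ℓ (j+2*b)]
  rw [h2, hlam a ((j+2*b) % (4*ℓ)) c ha hjb hc]

theorem main_mon (hℓ : 1 < ℓ)
    (Δ : Uq ℓ →ₐ[ℂ] Uq ℓ ⊗[ℂ] Uq ℓ)
    (hΔK : Δ (gK ℓ) = gK ℓ ⊗ₜ[ℂ] gK ℓ)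
    (hΔE : Δ (gE ℓ) = 1 ⊗ₜ[ℂ] gE ℓ + gE ℓ ⊗ₜ[ℂ] (gK ℓ ^ 2))
    (hΔF : Δ (gF ℓ) = gF ℓ ⊗ₜ[ℂ] 1 + (gKinv ℓ ^ 2) ⊗ₜ[ℂ] gF ℓ)
    (lam : Uq ℓ →ₗ[ℂ] ℂ)
    (hlam : ∀ i j m : ℕ, i ≤ ℓ - 1 → j ≤ 4 * ℓ - 1 → m ≤ ℓ - 1 →
      lam (gF ℓ ^ i * gK ℓ ^ j * gE ℓ ^ m) =
        (if i = ℓ - 1 then 1 else 0) * (if j = 2 * (ℓ - 1) then 1 else 0) *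
          (if m = ℓ - 1 then 1 else 0))
    (g : Uq ℓ →ₗ[ℂ] ℂ)
    (i j m : ℕ) (hi : i ≤ ℓ-1) (hj : j ≤ 4*ℓ-1) (hm : m ≤ ℓ-1) :
    LinearMap.mul' ℂ ℂ (TensorProduct.map g lam (Δ (gF ℓ ^ i * gK ℓ ^ j * gE ℓ ^ m)))
      = g 1 * lam (gF ℓ ^ i * gK ℓ ^ j * gE ℓ ^ m) := by
  have hx : Δ (gF ℓ ^ i * gK ℓ ^ j * gE ℓ ^ m)
      = Δ (gF ℓ) ^ i * ((gK ℓ ^ j) ⊗ₜ[ℂ] (gK ℓ ^ j)) * Δ (gE ℓ) ^ m := by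
    rw [map_mul, map_mul, map_pow, map_pow, map_pow, hΔK, Algebra.TensorProduct.tmul_pow]
  have hDx : Δ (gF ℓ ^ i * gK ℓ ^ j * gE ℓ ^ m)
      = ∑ a ∈ Finset.range (i+1), ∑ b ∈ Finset.range (m+1),
          (cq ((tval ℓ)⁻¹ ^ ((4*ℓ-1)*2)) i a * cq (tval ℓ ^ 2) m b) •
            ((gF ℓ ^ (i-a) * gK ℓ ^ ((4*ℓ-1)*2*a) * gK ℓ ^ j * gE ℓ ^ b) ⊗ₜ[ℂ]
             (gF ℓ ^ a * gK ℓ ^ j * (gE ℓ ^ (m-b) * gK ℓ ^ (2*b)))) := by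
    rw [hx, Delta_F_pow ℓ hℓ Δ hΔF i, Delta_E_pow ℓ Δ hΔE m]
    simp only [Finset.sum_mul, Finset.mul_sum, smul_mul_assoc, mul_smul_comm,
      Algebra.TensorProduct.tmul_mul_tmul, Finset.smul_sum, smul_smul]
    rw [Finset.sum_comm]
    refine Finset.sum_congr rfl fun a _ => Finset.sum_congr rfl fun b _ => ?_
    rw [mul_comm (cq (tval ℓ ^ 2) m b) (cq ((tval ℓ)⁻¹ ^ ((4*ℓ-1)*2)) i a)]
  have hLHS : LinearMap.mul' ℂ ℂ (TensorProduct.map g lam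
        (Δ (gF ℓ ^ i * gK ℓ ^ j * gE ℓ ^ m)))
      = ∑ a ∈ Finset.range (i+1), ∑ b ∈ Finset.range (m+1),
          (cq ((tval ℓ)⁻¹ ^ ((4*ℓ-1)*2)) i a * cq (tval ℓ ^ 2) m b) *
            (g (gF ℓ ^ (i-a) * gK ℓ ^ ((4*ℓ-1)*2*a) * gK ℓ ^ j * gE ℓ ^ b) *
             lam (gF ℓ ^ a * gK ℓ ^ j * (gE ℓ ^ (m-b) * gK ℓ ^ (2*b)))) := by
    rw [hDx]
    simp only [map_sum, map_smul, TensorProduct.map_tmul, LinearMap.mul'_apply, smul_eq_mul]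
  have hLHS2 : LinearMap.mul' ℂ ℂ (TensorProduct.map g lam
        (Δ (gF ℓ ^ i * gK ℓ ^ j * gE ℓ ^ m)))
      = ∑ a ∈ Finset.range (i+1), ∑ b ∈ Finset.range (m+1),
          (cq ((tval ℓ)⁻¹ ^ ((4*ℓ-1)*2)) i a * cq (tval ℓ ^ 2) m b) *
            (g (gF ℓ ^ (i-a) * gK ℓ ^ ((4*ℓ-1)*2*a) * gK ℓ ^ j * gE ℓ ^ b) *
             ((tval ℓ)⁻¹ ^ ((m-b)*(2*b)) *
               ((if a = ℓ-1 then 1 else 0) *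
                (if (j+2*b) % (4*ℓ) = 2*(ℓ-1) then 1 else 0) *
                (if m-b = ℓ-1 then 1 else 0)))) := by
    rw [hLHS]
    refine Finset.sum_congr rfl fun a ha => Finset.sum_congr rfl fun b hb => ?_
    rw [Finset.mem_range] at ha hb
    rw [lam_second ℓ hℓ lam hlam a (m-b) b j (by omega) (by omega) hj]
  rw [hLHS2, hlam i j m hi hj hm]
  by_cases hm' : m = ℓ-1
  · by_cases hi' : i = ℓ-1
    · by_cases hj' : j = 2*(ℓ-1)
      · -- main case: single surviving term (a,b) = (i,0)
        rw [if_pos hi', if_pos hj', if_pos hm']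
        rw [Finset.sum_eq_single_of_mem i (Finset.self_mem_range_succ i)
          (fun a ha hne => Finset.sum_eq_zero fun b hb => by
            rw [Finset.mem_range] at ha hb
            rw [if_neg (show a ≠ ℓ-1 by omega)]
            ring)]
        rw [Finset.sum_eq_single_of_mem 0 (Finset.mem_range.2 (by omega))
          (fun b hb hne => by
            rw [Finset.mem_range] at hb
            rw [if_neg (show m - b ≠ ℓ-1 by omega)]
            ring)]
        rw [cq_diag, cq_zero, if_pos hi']
        rw [if_pos (show (j+2*0) % (4*ℓ) = 2*(ℓ-1) by
          rw [mul_zero, add_zero, Nat.mod_eq_of_lt (by omega)]; exact hj')]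
        rw [if_pos (show m - 0 = ℓ-1 by omega)]
        have hg1 : gF ℓ ^ (i-i) * gK ℓ ^ ((4*ℓ-1)*2*i) * gK ℓ ^ j * gE ℓ ^ 0 = 1 := by
          rw [Nat.sub_self, pow_zero, pow_zero, one_mul, mul_one, ← pow_add]
          have hN : (4*ℓ-1)*2*i + j = 4*ℓ*(2*(ℓ-1)) := by
            subst hi' hj'
            have h1 : 1 ≤ ℓ := by omega
            have h4 : 1 ≤ 4*ℓ := by omega
            zify [h1, h4]
            ring
          rw [hN, pow_mul, rKpow, one_pow]
        rw [hg1]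
        ring
      · rw [if_neg hj']
        rw [show ((if i = ℓ-1 then (1:ℂ) else 0) * 0 * (if m = ℓ-1 then 1 else 0)) = 0 by ring,
          mul_zero]
        refine Finset.sum_eq_zero fun a ha => Finset.sum_eq_zero fun b hb => ?_
        rw [Finset.mem_range] at ha hb
        by_cases hb0 : m - b = ℓ-1
        · have hb' : b = 0 := by omega
          subst hb'
          rw [if_neg (show (j+2*0) % (4*ℓ) ≠ 2*(ℓ-1) by
            rw [mul_zero, add_zero, Nat.mod_eq_of_lt (by omega)]; exact hj')]
          ring
        · rw [if_neg hb0]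
          ring
    · rw [if_neg hi']
      rw [show ((0:ℂ) * (if j = 2*(ℓ-1) then 1 else 0) * (if m = ℓ-1 then 1 else 0)) = 0
        by ring, mul_zero]
      refine Finset.sum_eq_zero fun a ha => Finset.sum_eq_zero fun b hb => ?_
      rw [Finset.mem_range] at ha hb
      rw [if_neg (show a ≠ ℓ-1 by omega)]
      ring
  · rw [if_neg hm']
    rw [show ((if i = ℓ-1 then (1:ℂ) else 0) * (if j = 2*(ℓ-1) then 1 else 0) * 0) = 0
      by ring, mul_zero]
    refine Finset.sum_eq_zero fun a ha => Finset.sum_eq_zero fun b hb => ?_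
    rw [Finset.mem_range] at ha hb
    rw [if_neg (show m - b ≠ ℓ-1 by omega)]
    ring

end Coproduct

/-- The linear functional `λ` with `λ(F^i K^j E^m) = δ_{i,ℓ−1} δ_{j,2(ℓ−1)}
δ_{m,ℓ−1}` on the PBW basis is a left integral: for every linear functional `g`, the
convolution `g·λ : x ↦ Σ g(x′)λ(x″)` equals `g(1)·λ`. -/
theorem lam_is_left_integral (ℓ : ℕ) (hℓ : 1 < ℓ)
    (Δ : Uq ℓ →ₐ[ℂ] Uq ℓ ⊗[ℂ] Uq ℓ)
    (hΔK : Δ (gK ℓ) = gK ℓ ⊗ₜ[ℂ] gK ℓ)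
    (hΔKinv : Δ (gKinv ℓ) = gKinv ℓ ⊗ₜ[ℂ] gKinv ℓ)
    (hΔE : Δ (gE ℓ) = 1 ⊗ₜ[ℂ] gE ℓ + gE ℓ ⊗ₜ[ℂ] (gK ℓ ^ 2))
    (hΔF : Δ (gF ℓ) = gF ℓ ⊗ₜ[ℂ] 1 + (gKinv ℓ ^ 2) ⊗ₜ[ℂ] gF ℓ)
    (lam : Uq ℓ →ₗ[ℂ] ℂ)
    (hlam : ∀ i j m : ℕ, i ≤ ℓ - 1 → j ≤ 4 * ℓ - 1 → m ≤ ℓ - 1 →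
      lam (gF ℓ ^ i * gK ℓ ^ j * gE ℓ ^ m) =
        (if i = ℓ - 1 then 1 else 0) * (if j = 2 * (ℓ - 1) then 1 else 0) *
          (if m = ℓ - 1 then 1 else 0))
    (g : Uq ℓ →ₗ[ℂ] ℂ) :
    ∀ x : Uq ℓ,
      LinearMap.mul' ℂ ℂ (TensorProduct.map g lam (Δ x)) = g 1 * lam x := by
  intro x
  have hx := SM_top ℓ hℓ x
  induction hx using Submodule.span_induction with
  | mem y hy =>
    obtain ⟨i, j, m, hi, hj, hm, rfl⟩ := hy
    exact main_mon ℓ hℓ Δ hΔK hΔE hΔF lam hlam g i j m hi hj hm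
  | zero => simp
  | add y z _ _ hy hz => simp only [map_add, hy, hz]; ring
  | smul c y _ hy => simp only [map_smul, smul_eq_mul, hy]; ring

end RestrictedQsl2
end
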